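/- Fix ε with 0 < |ε| < 1 and let Φ_ε be the rational map Φ_ε(x,y) = ( (ε(ε+1)x² + εxy + (1−2ε)x)/D(x,y), (ε(2ε−4)x² − ε(ε+3)xy + 6εx − εy² + (2ε+1)y)/D(x,y) ), D(x,y) = 2ε²x² − ε(ε+1)x − εy + 2ε + 1. Then the set of energy levels h ∈ (−5/2, −2) for which the restriction of Φ_ε to the invariant conic C_h is periodic (i.e. there exists q ≥ 1 such that the q-th iterate of Φ_ε fixes every point of C_h whose forward orbit is defined) is dense in the interval (−5/2, −2). -/

import Mathlib

/-- Denominator of the Kahan–Hirota–Kimura map `Φ_ε` of the system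
`ẋ = x(x+y-2)`, `ẏ = -x(2x+y-3)`. -/
noncomputable def Dps (ε x y : ℝ) : ℝ :=
  2 * ε ^ 2 * x ^ 2 - ε * (ε + 1) * x - ε * y + 2 * ε + 1

/-- The Kahan–Hirota–Kimura map `Φ_ε` of the system `ẋ = x(x+y-2)`, `ẏ = -x(2x+y-3)`. -/
noncomputable def Phips (ε : ℝ) (q : ℝ × ℝ) : ℝ × ℝ :=
  ((ε * (ε + 1) * q.1 ^ 2 + ε * q.1 * q.2 + (1 - 2 * ε) * q.1) / Dps ε q.1 q.2,
   (ε * (2 * ε - 4) * q.1 ^ 2 - ε * (ε + 3) * q.1 * q.2 + 6 * ε * q.1 - ε * q.2 ^ 2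
      + (2 * ε + 1) * q.2) / Dps ε q.1 q.2)

/-- The invariant conic `C_h` of `Φ_ε`. -/
def Cps (ε h : ℝ) : Set (ℝ × ℝ) :=
  {q : ℝ × ℝ | (2 - 5 * ε ^ 2 - 2 * ε ^ 2 * h) * q.1 ^ 2 + 2 * q.1 * q.2 + q.2 ^ 2
      - 6 * q.1 - 4 * q.2 - 2 * h = 0}

/-!
For `h < -2` put `s = √(-4 - 2h) > 0`. On `C_h` the complex coordinate
`W = (i s (y - 2) + s² - (1 - i s) x) / x` is injective, and `Φ_ε` acts on it as multiplication
by the unimodular number `(1 + i ε s) / (1 - i ε s) = exp (2 i arctan (ε s))`. Hence `Φ_ε` is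
periodic on `C_h` whenever `arctan (ε s) ∈ π ℚ`, and since `h ↦ arctan (ε √(-4 - 2h))` is
continuous and injective for `ε ≠ 0`, these levels are dense.
-/

open Complex

theorem Ioo_subset_closure_inter_preimage {α δ : Type*} [ConditionallyCompleteLinearOrder α]
    [TopologicalSpace α] [OrderTopology α] [DenselyOrdered α] [LinearOrder δ] [TopologicalSpace δ]
    [OrderClosedTopology δ] [DenselyOrdered δ] {f : α → δ} {a b : α} {S : Set δ}
    (hf : ContinuousOn f (Set.Ioo a b)) (hinj : Set.InjOn f (Set.Ioo a b)) (hS : Dense S) :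
    Set.Ioo a b ⊆ closure (Set.Ioo a b ∩ f ⁻¹' S) := by
  intro x hx
  rw [mem_closure_iff_nhds]
  intro U hU
  obtain ⟨l, hlx, hl⟩ :=
    exists_Ioc_subset_of_mem_nhds (Filter.inter_mem hU (isOpen_Ioo.mem_nhds hx)) ⟨a, hx.1⟩
  obtain ⟨y, hly, hyx⟩ := exists_between hlx
  have hsub : Set.uIcc y x ⊆ U ∩ Set.Ioo a b := by
    rw [Set.uIcc_of_le hyx.le]
    exact (Set.Icc_subset_Ioc_iff hyx.le).2 ⟨hly, le_rfl⟩ |>.trans hl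
  have hne : f y ≠ f x := hinj.ne (hsub ⟨by simp, by simp⟩ |>.2) hx hyx.ne
  obtain ⟨θ, hθ, hθS⟩ :=
    hS.inter_open_nonempty _ isOpen_Ioo (Set.nonempty_Ioo.2 (min_lt_max.2 hne))
  obtain ⟨t, ht, rfl⟩ := intermediate_value_uIcc (hf.mono (hsub.trans Set.inter_subset_right))
    (Set.Ioo_subset_Icc_self hθ)
  exact ⟨t, (hsub ht).1, (hsub ht).2, hθS⟩

noncomputable def rotFactor (a : ℝ) : ℂ := (1 + a * I) / (1 - a * I)

theorem one_sub_mul_I_ne_zero (a : ℝ) : (1 : ℂ) - a * I ≠ 0 := by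
  intro h
  simpa using congrArg re h

theorem rotFactor_eq_exp (a : ℝ) : rotFactor a = exp (2 * Real.arctan a * I) := by
  set θ := Real.arctan a
  have hcos : (Real.cos θ : ℂ) ≠ 0 := ofReal_ne_zero.2 (Real.cos_arctan_pos a).ne'
  have ha : (a : ℂ) = Real.sin θ / Real.cos θ := by
    rw [← ofReal_div, ← Real.tan_eq_sin_div_cos, Real.tan_arctan]
  have hpy : (Real.sin θ : ℂ) ^ 2 + Real.cos θ ^ 2 = 1 := by
    exact_mod_cast Real.sin_sq_add_cos_sq θ
  rw [rotFactor, div_eq_iff (one_sub_mul_I_ne_zero a),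
    show (2 : ℂ) * θ * I = θ * I + θ * I by ring, exp_add, exp_mul_I, ← ofReal_cos,
    ← ofReal_sin, ha]
  field_simp
  linear_combination (-(Real.cos θ + Real.sin θ * I) : ℂ) * hpy
    + (Real.cos θ + Real.sin θ * I) * (Real.sin θ : ℂ) ^ 2 * I_sq

theorem rotFactor_pow_den_eq_one {a : ℝ} {r : ℚ} (hr : Real.arctan a = Real.pi * r) :
    rotFactor a ^ r.den = 1 := by
  have hnum : (r.den : ℂ) * r = r.num := by exact_mod_cast Rat.den_mul_eq_num r
  rw [rotFactor_eq_exp, ← exp_nat_mul, hr, ← exp_int_mul_two_pi_mul_I r.num, ← hnum]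
  push_cast
  ring_nf

noncomputable def linCoord (s : ℝ) (z : ℝ × ℝ) : ℂ :=
  (s * I * (z.2 - 2) + s ^ 2 - (1 - s * I) * z.1) / z.1

theorem linCoord_div_div (s n₁ n₂ : ℝ) {d : ℝ} (hd : d ≠ 0) :
    linCoord s (n₁ / d, n₂ / d) = (s * I * (n₂ - 2 * d) + s ^ 2 * d - (1 - s * I) * n₁) / n₁ := by
  have hd' : (d : ℂ) ≠ 0 := ofReal_ne_zero.2 hd
  simp only [linCoord]
  push_cast
  conv_rhs => rw [← div_div_div_cancel_right₀ hd']
  congr 1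
  field_simp

theorem linCoord_eq {s : ℝ} {z : ℝ × ℝ} (hx : z.1 ≠ 0) :
    linCoord s z = (s ^ 2 / z.1 - 1 : ℝ) + (s * ((z.2 - 2) / z.1 + 1) : ℝ) * I := by
  have hx' : (z.1 : ℂ) ≠ 0 := ofReal_ne_zero.2 hx
  simp only [linCoord]
  push_cast
  field_simp
  ring

section Dynamics

variable {ε h s : ℝ} {z : ℝ × ℝ}

theorem Phips_mem_Cps (hz : z ∈ Cps ε h) (hD : Dps ε z.1 z.2 ≠ 0) : Phips ε z ∈ Cps ε h := by
  obtain ⟨x, y⟩ := z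
  simp only [Cps, Phips, Set.mem_ofPred_eq] at hz ⊢
  field_simp
  simp only [Dps]
  linear_combination ((1 + 2 * ε - ε * y - ε * (ε + 1) * x) ^ 2 + (2 * ε * x) ^ 2) * hz

theorem iterate_mem_Cps (hz : z ∈ Cps ε h)
    (hD : ∀ n : ℕ, Dps ε ((Phips ε)^[n] z).1 ((Phips ε)^[n] z).2 ≠ 0) (n : ℕ) :
    (Phips ε)^[n] z ∈ Cps ε h := by
  induction n with
  | zero => exact hz
  | succ n ih =>
    rw [Function.iterate_succ_apply']
    exact Phips_mem_Cps ih (hD n)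

theorem fst_ne_zero_of_mem_Cps (hh : h < -2) (hz : z ∈ Cps ε h) : z.1 ≠ 0 := by
  intro hx
  simp only [Cps, Set.mem_ofPred_eq, hx] at hz
  nlinarith [sq_nonneg (z.2 - 2)]

theorem linCoord_injOn (hh : h < -2) (hs : s ≠ 0) : Set.InjOn (linCoord s) (Cps ε h) := by
  rintro ⟨x₁, y₁⟩ hz₁ ⟨x₂, y₂⟩ hz₂ hW
  have hx₁ : x₁ ≠ 0 := fst_ne_zero_of_mem_Cps hh hz₁
  have hx₂ : x₂ ≠ 0 := fst_ne_zero_of_mem_Cps hh hz₂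
  rw [linCoord_eq hx₁, linCoord_eq hx₂, Complex.ext_iff] at hW
  simp only [add_re, add_im, ofReal_re, ofReal_im, mul_re, mul_im, I_re, I_im, mul_zero,
    mul_one, sub_zero, add_zero, zero_add, sub_left_inj] at hW
  obtain ⟨hre, him⟩ := hW
  obtain rfl : x₁ = x₂ :=
    inv_inj.1 (mul_left_cancel₀ (pow_ne_zero 2 hs) (by simpa only [div_eq_mul_inv] using hre))
  have hy := (div_left_inj' hx₁).1 (add_left_injective 1 (mul_left_cancel₀ hs him))
  rw [sub_left_inj.1 hy]

-- `linCoord_Phips` with denominators cleared; `hz` is the equation of `C_h` with `h` eliminated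
-- through `s ^ 2 = -4 - 2 * h`.
theorem linCoord_Phips_cross_mul {e s x y : ℂ}
    (hz : (2 - e ^ 2 * (1 - s ^ 2)) * x ^ 2 + 2 * x * y + y ^ 2 - 6 * x - 4 * y + 4 + s ^ 2 = 0) :
    (s * I * ((e * (2 * e - 4) * x ^ 2 - e * (e + 3) * x * y + 6 * e * x - e * y ^ 2
          + (2 * e + 1) * y) - 2 * (2 * e ^ 2 * x ^ 2 - e * (e + 1) * x - e * y + 2 * e + 1))
        + s ^ 2 * (2 * e ^ 2 * x ^ 2 - e * (e + 1) * x - e * y + 2 * e + 1)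
        - (1 - s * I) * (e * (e + 1) * x ^ 2 + e * x * y + (1 - 2 * e) * x))
      * ((1 - e * s * I) * x)
    = (1 + e * s * I) * (s * I * (y - 2) + s ^ 2 - (1 - s * I) * x)
        * (e * (e + 1) * x ^ 2 + e * x * y + (1 - 2 * e) * x) := by
  linear_combination (-2 * I * x * e * s) * hz +
    (4 * e * s ^ 2 * x - 2 * e * s ^ 2 * x * y - 2 * e * s ^ 2 * x ^ 2 - 2 * e ^ 2 * s ^ 2 * x ^ 2
      + 2 * e ^ 2 * s ^ 2 * x ^ 3) * I_sq

theorem linCoord_Phips (hh : h < -2) (hs : s ^ 2 = -4 - 2 * h) (hz : z ∈ Cps ε h)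
    (hD : Dps ε z.1 z.2 ≠ 0) : linCoord s (Phips ε z) = rotFactor (ε * s) * linCoord s z := by
  obtain ⟨x, y⟩ := z
  have hx : x ≠ 0 := fst_ne_zero_of_mem_Cps hh hz
  have hN : ε * (ε + 1) * x ^ 2 + ε * x * y + (1 - 2 * ε) * x ≠ 0 :=
    (div_ne_zero_iff.1 (fst_ne_zero_of_mem_Cps hh (Phips_mem_Cps hz hD))).1
  have hzs : (2 - ε ^ 2 * (1 - s ^ 2)) * x ^ 2 + 2 * x * y + y ^ 2 - 6 * x - 4 * y + 4 + s ^ 2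
      = 0 := by
    simp only [Cps, Set.mem_ofPred_eq] at hz
    linear_combination hz + (ε ^ 2 * x ^ 2 + 1) * hs
  rw [Phips, linCoord_div_div _ _ _ hD, linCoord, rotFactor, div_mul_div_comm,
    div_eq_div_iff (by exact_mod_cast hN)
      (mul_ne_zero (one_sub_mul_I_ne_zero _) (ofReal_ne_zero.2 hx))]
  simp only [Dps]
  push_cast
  exact linCoord_Phips_cross_mul (by exact_mod_cast hzs)

theorem linCoord_iterate_Phips (hh : h < -2) (hs : s ^ 2 = -4 - 2 * h) (hz : z ∈ Cps ε h)
    (hD : ∀ n : ℕ, Dps ε ((Phips ε)^[n] z).1 ((Phips ε)^[n] z).2 ≠ 0) (n : ℕ) :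
    linCoord s ((Phips ε)^[n] z) = rotFactor (ε * s) ^ n * linCoord s z := by
  induction n with
  | zero => simp
  | succ n ih =>
    rw [Function.iterate_succ_apply', linCoord_Phips hh hs (iterate_mem_Cps hz hD n) (hD n), ih,
      pow_succ', mul_assoc]

theorem iterate_Phips_eq_self_of_rotFactor_pow_eq_one (hh : h < -2) (hs : s ^ 2 = -4 - 2 * h)
    {q : ℕ} (hq : rotFactor (ε * s) ^ q = 1) (hz : z ∈ Cps ε h)
    (hD : ∀ n : ℕ, Dps ε ((Phips ε)^[n] z).1 ((Phips ε)^[n] z).2 ≠ 0) :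
    (Phips ε)^[q] z = z := by
  have hs₀ : s ≠ 0 := by
    rintro rfl
    linarith
  refine linCoord_injOn hh hs₀ (iterate_mem_Cps hz hD q) hz ?_
  rw [linCoord_iterate_Phips hh hs hz hD, hq, one_mul]

end Dynamics

theorem stmt_8 (ε : ℝ) (hε0 : 0 < |ε|) :
    Set.Ioo (-5 / 2 : ℝ) (-2 : ℝ) ⊆
      closure {h : ℝ | h ∈ Set.Ioo (-5 / 2 : ℝ) (-2 : ℝ) ∧
        ∃ q : ℕ, 1 ≤ q ∧ ∀ z ∈ Cps ε h,
          (∀ n : ℕ, Dps ε ((Phips ε)^[n] z).1 ((Phips ε)^[n] z).2 ≠ 0) →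
          (Phips ε)^[q] z = z} := by
  have hε : ε ≠ 0 := abs_pos.mp hε0
  set rotAngle : ℝ → ℝ := fun h ↦ Real.arctan (ε * √(-4 - 2 * h))
  have hcont : ContinuousOn rotAngle (Set.Ioo (-5 / 2) (-2)) := by fun_prop
  have hinj : Set.InjOn rotAngle (Set.Ioo (-5 / 2) (-2)) := by
    intro a ha b hb hab
    have := mul_left_cancel₀ hε (Real.arctan_injective hab)
    rw [Real.sqrt_inj (by linarith [ha.2]) (by linarith [hb.2])] at this
    linarith
  have hdense : Dense (Set.range fun r : ℚ ↦ Real.pi * r) :=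
    (mul_left_surjective₀ Real.pi_ne_zero).denseRange.comp Rat.denseRange_cast
      (continuous_const_mul _)
  refine (Ioo_subset_closure_inter_preimage hcont hinj hdense).trans (closure_mono ?_)
  rintro h ⟨hh, r, hr⟩
  exact ⟨hh, r.den, r.pos, fun z hz hD ↦ iterate_Phips_eq_self_of_rotFactor_pow_eq_one hh.2
    (Real.sq_sqrt (by linarith [hh.2])) (rotFactor_pow_den_eq_one hr.symm) hz hD⟩
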